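/- arXiv:2602.02009 — 4 statements merged into one kernel-verified Lean document; each statement's English description precedes it below -/
import Mathlib

section
/- Let E be a real inner product space, ℓ : E → ℝ, v : E → ℝ → E, η : ℝ → ℝ, and let x : ℝ → E solve the logic-adjusted ODE at time t (x has derivative v(x(t), t) − η(t) • g at t, where ℓ has gradient g at x(t)). If ℓ(x(t)) > 0 implies g ≠ 0 and η(t) ≥ ⟪g, v(x(t), t)⟫ / ‖g‖², then whenever ℓ(x(t)) > 0 the derivative of s ↦ ℓ(x(s)) at t is ≤ 0. (Proposition A.2: sufficient condition for monotone violation decrease.) -/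
open RealInnerProductSpace

theorem HasGradientAt.comp_hasDerivAt {𝕜 F : Type*} [RCLike 𝕜] [NormedAddCommGroup F]
    [InnerProductSpace 𝕜 F] [CompleteSpace F] {f : F → 𝕜} {g : F} {γ : 𝕜 → F} {γ' : F} {t : 𝕜}
    (hf : HasGradientAt f g (γ t)) (hγ : HasDerivAt γ γ' t) :
    HasDerivAt (fun s => f (γ s)) (inner 𝕜 g γ') t :=
  hf.hasFDerivAt.comp_hasDerivAt t hγ

theorem real_inner_sub_smul_self_nonpos {E : Type*} [NormedAddCommGroup E]
    [InnerProductSpace ℝ E] {g w : E} {c : ℝ} (hc : ⟪g, w⟫ / ‖g‖ ^ 2 ≤ c) :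
    ⟪g, w - c • g⟫ ≤ 0 := by
  rcases eq_or_ne g 0 with rfl | hg
  · simp
  have hw : ⟪g, w⟫ ≤ c * ‖g‖ ^ 2 := (div_le_iff₀ (by positivity)).mp hc
  rw [inner_sub_right, real_inner_smul_right, real_inner_self_eq_norm_sq]
  linarith

theorem prop_monotone_decrease_general
    {E : Type*} [NormedAddCommGroup E] [InnerProductSpace ℝ E] [CompleteSpace E]
    (ℓ : E → ℝ) (v : E → ℝ → E) (η : ℝ → ℝ) (x : ℝ → E) (t : ℝ) (g : E)
    (hg : HasGradientAt ℓ g (x t))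
    (hx : HasDerivAt x (v (x t) t - η t • g) t)
    (hη : η t ≥ ⟪g, v (x t) t⟫ / ‖g‖ ^ 2) :
    deriv (fun s => ℓ (x s)) t ≤ 0 := by
  rw [(hg.comp_hasDerivAt hx).deriv]
  exact real_inner_sub_smul_self_nonpos hη

/-- Proposition A.2 (sufficient condition for monotone violation decrease):
under the logic-adjusted dynamics, if `η t ≥ ⟪g, v (x t) t⟫ / ‖g‖²` (and `g ≠ 0`
whenever the violation is positive), then whenever `ℓ (x t) > 0` the derivative
of `s ↦ ℓ (x s)` at `t` is nonpositive. -/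
theorem prop_monotone_decrease
    {E : Type*} [NormedAddCommGroup E] [InnerProductSpace ℝ E] [CompleteSpace E]
    (ℓ : E → ℝ) (v : E → ℝ → E) (η : ℝ → ℝ) (x : ℝ → E) (t : ℝ) (g : E)
    (hg : HasGradientAt ℓ g (x t))
    (hx : HasDerivAt x (v (x t) t - η t • g) t)
    (hne : 0 < ℓ (x t) → g ≠ 0)
    (hη : η t ≥ ⟪g, v (x t) t⟫ / ‖g‖ ^ 2)
    (hpos : 0 < ℓ (x t)) :
    deriv (fun s => ℓ (x s)) t ≤ 0 :=
  prop_monotone_decrease_general ℓ v η x t g hg hx hη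
end

section
/- Let f : ℝ → ℝ be continuous on an interval [s, T] and differentiable at every point of (s, T). Suppose f(t) ≥ 0 for all t ∈ [s, T], and that at every t ∈ (s, T) with f(t) > 0 the derivative f′(t) ≤ 0. Then f(t) ≤ f(s) for every t ∈ [s, T]. (Integrated form of Proposition A.2: under the adjustment condition, the violation ℓ(x_t) never increases over time.) -/
/-- Integrated form of Proposition A.2: if `f` is continuous on `[s, T]`,
differentiable on `(s, T)`, nonnegative on `[s, T]`, and has nonpositive
derivative whenever it is strictly positive, then `f` never exceeds its
initial value on `[s, T]`. -/
theorem violation_never_increases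
    (f : ℝ → ℝ) (s T : ℝ)
    (hcont : ContinuousOn f (Set.Icc s T))
    (hdiff : ∀ t ∈ Set.Ioo s T, DifferentiableAt ℝ f t)
    (hnonneg : ∀ t ∈ Set.Icc s T, 0 ≤ f t)
    (hderiv : ∀ t ∈ Set.Ioo s T, 0 < f t → deriv f t ≤ 0) :
    ∀ t ∈ Set.Icc s T, f t ≤ f s := by
  have hanti : AntitoneOn f (Set.Icc s T) := by
    apply antitoneOn_of_deriv_nonpos (convex_Icc s T) hcont
    · intro t ht
      rw [interior_Icc] at ht
      exact (hdiff t ht).differentiableWithinAt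
    · intro t ht
      rw [interior_Icc] at ht
      rcases lt_or_eq_of_le (hnonneg t (Set.Ioo_subset_Icc_self ht)) with h | h
      · exact hderiv t ht h
      · -- f t = 0, local min, deriv = 0
        have hmin : IsLocalMin f t := by
          filter_upwards [isOpen_Ioo.mem_nhds ht] with x hx
          have hx' := Set.Ioo_subset_Icc_self hx
          rw [← h]
          exact hnonneg x hx'
        rw [hmin.deriv_eq_zero]
  intro t ht
  exact hanti (Set.left_mem_Icc.mpr (ht.1.trans ht.2)) ht ht.1
end

section
/- Let E be a real inner product space, let v : E → ℝ → E be L_v-Lipschitz in its first argument uniformly in time (L_v ≥ 0), let g : E → E satisfy ‖g(z)‖ ≤ G for all z (G ≥ 0), and let η : ℝ → ℝ be continuous and nonnegative on [t₀, 1]. Suppose x, y : ℝ → E satisfy, for all t ∈ [t₀, 1], x′(t) = v(x(t), t) and y′(t) = v(y(t), t) − η(t) • g(y(t)), with x(t₀) = y(t₀). Then for all t ∈ [t₀, 1], ‖y(t) − x(t)‖ ≤ ∫_{t₀}^{t} e^{L_v(t−s)} η(s) G ds. (Proposition A.4: trajectory deviation under late-time adjustment, via Grönwall's inequality.) -/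
/-!
The deviation `y - x` has slope at most `Lv ‖y - x‖ + η G`, so its norm stays below the
solution of the scalar equation `u' = Lv u + η G`, `u t₀ = 0`; variation of constants writes
that solution as the integral on the right-hand side.
-/

open Set Real

/-- The solution `u` of `u' = K u + φ`, `u a = δ`, by variation of constants. -/
noncomputable def gronwallIntegralBound (δ K : ℝ) (φ : ℝ → ℝ) (a t : ℝ) : ℝ :=
  δ * exp (K * (t - a)) + ∫ s in a..t, exp (K * (t - s)) * φ s

theorem gronwallIntegralBound_eq_exp_mul (δ K : ℝ) (φ : ℝ → ℝ) (a t : ℝ) :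
    gronwallIntegralBound δ K φ a t =
      exp (K * t) * (δ * exp (-(K * a)) + ∫ s in a..t, exp (-(K * s)) * φ s) := by
  rw [gronwallIntegralBound, mul_add, ← intervalIntegral.integral_const_mul]
  congr 1
  · rw [mul_sub, sub_eq_add_neg, exp_add]; ring
  · refine intervalIntegral.integral_congr fun s _ => ?_
    rw [mul_sub, sub_eq_add_neg, exp_add]; ring

theorem hasDerivAt_gronwallIntegralBound {φ : ℝ → ℝ} (hφ : Continuous φ) (δ K a t : ℝ) :
    HasDerivAt (gronwallIntegralBound δ K φ a)
      (K * gronwallIntegralBound δ K φ a t + φ t) t := by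
  have hψ : Continuous fun s => exp (-(K * s)) * φ s := by fun_prop
  have hint : HasDerivAt (fun t => ∫ s in a..t, exp (-(K * s)) * φ s)
      (exp (-(K * t)) * φ t) t :=
    intervalIntegral.integral_hasDerivAt_right (hψ.intervalIntegrable _ _)
      hψ.stronglyMeasurable.stronglyMeasurableAtFilter hψ.continuousAt
  have hexp : HasDerivAt (fun t => exp (K * t)) (exp (K * t) * K) t := by
    simpa using ((hasDerivAt_id t).const_mul K).exp
  rw [funext (gronwallIntegralBound_eq_exp_mul δ K φ a)]
  refine (hexp.mul (hint.const_add (δ * exp (-(K * a))))).congr_deriv ?_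
  rw [← mul_assoc, ← exp_add, add_neg_cancel, exp_zero, one_mul]
  ring

section Comparison

variable {E : Type*} [NormedAddCommGroup E] [NormedSpace ℝ E] {f f' : ℝ → E} {φ : ℝ → ℝ}
  {δ K a b : ℝ}

/-- The strict barrier `gronwallIntegralBound + ε e^{(K+1)(t-a)}` can never be touched, since
its slope exceeds the admissible slope of `‖f‖` by `ε e^{(K+1)(t-a)}`. -/
theorem norm_le_gronwallIntegralBound_add (hφ : Continuous φ) (hf : ContinuousOn f (Icc a b))
    (hf' : ∀ t ∈ Ico a b, HasDerivWithinAt f (f' t) (Ici t) t) (ha : ‖f a‖ ≤ δ)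
    (bound : ∀ t ∈ Ico a b, ‖f' t‖ ≤ K * ‖f t‖ + φ t) {ε : ℝ} (hε : 0 < ε) :
    ∀ ⦃t⦄, t ∈ Icc a b →
      ‖f t‖ ≤ gronwallIntegralBound δ K φ a t + ε * exp ((K + 1) * (t - a)) := by
  have hpert (t : ℝ) : HasDerivAt (fun t => ε * exp ((K + 1) * (t - a)))
      (ε * ((K + 1) * exp ((K + 1) * (t - a)))) t := by
    simpa [mul_comm] using ((((hasDerivAt_id t).sub_const a).const_mul (K + 1)).exp).const_mul ε
  have hB (t : ℝ) := (hasDerivAt_gronwallIntegralBound hφ δ K a t).add (hpert t)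
  refine image_norm_le_of_norm_deriv_right_lt_deriv_boundary' hf hf' ?_
    (fun t _ => (hB t).continuousAt.continuousWithinAt) (fun t _ => (hB t).hasDerivWithinAt) ?_
  · simp only [gronwallIntegralBound, sub_self, mul_zero, exp_zero, mul_one,
      intervalIntegral.integral_same, add_zero]
    linarith
  · intro t ht hft
    have hpos : 0 < ε * exp ((K + 1) * (t - a)) := by positivity
    calc ‖f' t‖ ≤ K * ‖f t‖ + φ t := bound t ht
      _ < _ := by rw [hft]; nlinarith

theorem norm_le_gronwallIntegralBound_of_continuous (hφ : Continuous φ)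
    (hf : ContinuousOn f (Icc a b))
    (hf' : ∀ t ∈ Ico a b, HasDerivWithinAt f (f' t) (Ici t) t) (ha : ‖f a‖ ≤ δ)
    (bound : ∀ t ∈ Ico a b, ‖f' t‖ ≤ K * ‖f t‖ + φ t) :
    ∀ ⦃t⦄, t ∈ Icc a b → ‖f t‖ ≤ gronwallIntegralBound δ K φ a t := by
  intro t ht
  have hc : 0 < exp ((K + 1) * (t - a)) := exp_pos _
  refine le_of_forall_pos_le_add fun ε hε => ?_
  simpa [div_mul_cancel₀ _ hc.ne'] using
    norm_le_gronwallIntegralBound_add hφ hf hf' ha bound (div_pos hε hc) ht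

theorem gronwallIntegralBound_congr {φ ψ : ℝ → ℝ} {t : ℝ} (ht : a ≤ t)
    (h : EqOn φ ψ (Icc a t)) :
    gronwallIntegralBound δ K φ a t = gronwallIntegralBound δ K ψ a t := by
  unfold gronwallIntegralBound
  congr 1
  refine intervalIntegral.integral_congr fun s hs => ?_
  rw [uIcc_of_le ht] at hs
  simp only [h hs]

theorem norm_le_gronwallIntegralBound (hφ : ContinuousOn φ (Icc a b))
    (hf : ContinuousOn f (Icc a b))
    (hf' : ∀ t ∈ Ico a b, HasDerivWithinAt f (f' t) (Ici t) t) (ha : ‖f a‖ ≤ δ)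
    (bound : ∀ t ∈ Ico a b, ‖f' t‖ ≤ K * ‖f t‖ + φ t) :
    ∀ ⦃t⦄, t ∈ Icc a b → ‖f t‖ ≤ gronwallIntegralBound δ K φ a t := by
  intro t ht
  have hab : a ≤ b := ht.1.trans ht.2
  set φ₁ := IccExtend hab ((Icc a b).domRestrict φ)
  have hφ₁ : EqOn φ₁ φ (Icc a b) := fun s hs => IccExtend_of_mem hab _ hs
  rw [← gronwallIntegralBound_congr ht.1 (hφ₁.mono (Icc_subset_Icc_right ht.2))]
  refine norm_le_gronwallIntegralBound_of_continuous (φ := φ₁)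
    (continuous_IccExtend_iff.2 hφ.domRestrict) hf hf' ha (fun s hs => ?_) ht
  rw [hφ₁ (Ico_subset_Icc_self hs)]
  exact bound s hs

end Comparison

theorem prop_gronwall_deviation_general
    {E : Type*} [NormedAddCommGroup E] [InnerProductSpace ℝ E]
    (v : E → ℝ → E) (Lv : ℝ)
    (hlip : ∀ (t : ℝ) (z w : E), ‖v z t - v w t‖ ≤ Lv * ‖z - w‖)
    (g : E → E) (G : ℝ) (hgb : ∀ z : E, ‖g z‖ ≤ G)
    (η : ℝ → ℝ) (t₀ : ℝ)
    (hηcont : ContinuousOn η (Set.Icc t₀ 1))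
    (hηnn : ∀ s ∈ Set.Icc t₀ 1, 0 ≤ η s)
    (x y : ℝ → E)
    (hx : ∀ t ∈ Set.Icc t₀ 1, HasDerivAt x (v (x t) t) t)
    (hy : ∀ t ∈ Set.Icc t₀ 1, HasDerivAt y (v (y t) t - η t • g (y t)) t)
    (h0 : x t₀ = y t₀) :
    ∀ t ∈ Set.Icc t₀ 1,
      ‖y t - x t‖ ≤ ∫ s in t₀..t, Real.exp (Lv * (t - s)) * η s * G := by
  intro t ht
  have hdev (s : ℝ) (hs : s ∈ Icc t₀ 1) :
      HasDerivAt (y - x) ((v (y s) s - v (x s) s) - η s • g (y s)) s := by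
    convert (hy s hs).sub (hx s hs) using 1
    abel
  have hslope (s : ℝ) (hs : s ∈ Icc t₀ 1) :
      ‖(v (y s) s - v (x s) s) - η s • g (y s)‖ ≤ Lv * ‖(y - x) s‖ + η s * G := by
    refine (norm_sub_le _ _).trans (add_le_add (hlip s _ _) ?_)
    rw [norm_smul, norm_of_nonneg (hηnn s hs)]
    exact mul_le_mul_of_nonneg_left (hgb _) (hηnn s hs)
  have hbound := norm_le_gronwallIntegralBound (δ := 0) (hηcont.mul continuousOn_const)
    (fun s hs => (hdev s hs).continuousAt.continuousWithinAt)
    (fun s hs => (hdev s (Ico_subset_Icc_self hs)).hasDerivWithinAt)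
    (by simp [h0]) (fun s hs => hslope s (Ico_subset_Icc_self hs)) ht
  simpa [gronwallIntegralBound, mul_assoc] using hbound

/-- Proposition A.4 (trajectory deviation under late-time adjustment):
if `x` solves the base ODE `x' = v(x,t)` and `y` solves the logic-adjusted ODE
`y' = v(y,t) - η(t) • g(y)` on `[t₀, 1]` with `x t₀ = y t₀`, `v` being
`Lv`-Lipschitz in its first argument, `‖g‖ ≤ G`, and `η` continuous and
nonnegative, then the deviation obeys the Grönwall bound
`‖y t - x t‖ ≤ ∫_{t₀}^t e^{Lv (t - s)} η s * G ds`. -/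
theorem prop_gronwall_deviation
    {E : Type*} [NormedAddCommGroup E] [InnerProductSpace ℝ E]
    (v : E → ℝ → E) (Lv : ℝ) (hLv : 0 ≤ Lv)
    (hlip : ∀ (t : ℝ) (z w : E), ‖v z t - v w t‖ ≤ Lv * ‖z - w‖)
    (g : E → E) (G : ℝ) (hG : 0 ≤ G) (hgb : ∀ z : E, ‖g z‖ ≤ G)
    (η : ℝ → ℝ) (t₀ : ℝ)
    (hηcont : ContinuousOn η (Set.Icc t₀ 1))
    (hηnn : ∀ s ∈ Set.Icc t₀ 1, 0 ≤ η s)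
    (x y : ℝ → E)
    (hx : ∀ t ∈ Set.Icc t₀ 1, HasDerivAt x (v (x t) t) t)
    (hy : ∀ t ∈ Set.Icc t₀ 1, HasDerivAt y (v (y t) t - η t • g (y t)) t)
    (h0 : x t₀ = y t₀) :
    ∀ t ∈ Set.Icc t₀ 1,
      ‖y t - x t‖ ≤ ∫ s in t₀..t, Real.exp (Lv * (t - s)) * η s * G :=
  prop_gronwall_deviation_general v Lv hlip g G hgb η t₀ hηcont hηnn x y hx hy h0
end

section
/- Let E be a real inner product space, let v : E → ℝ → E be L_v-Lipschitz in its first argument uniformly in time (L_v ≥ 0), let g : E → E satisfy ‖g(z)‖ ≤ G for all z (G ≥ 0), let t₀ ∈ [0, 1), η_max ≥ 0, and define the quadratic ramp schedule η(t) = η_max·((t − t₀)/(1 − t₀))² for t ∈ [t₀, 1]. Suppose x, y : ℝ → E satisfy, for all t ∈ [t₀, 1], x′(t) = v(x(t), t) and y′(t) = v(y(t), t) − η(t) • g(y(t)), with x(t₀) = y(t₀). Then ‖y(1) − x(1)‖ ≤ e^{L_v(1−t₀)} · η_max · G · (1 − t₀)/3. (Quantitative terminal deviation bound for the paper's quadratic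 late-time adjustment schedule, obtained from Proposition A.4 using ∫_{t₀}^{1} η(s) ds = η_max(1 − t₀)/3.) -/
/-!
The deviation `f = y - x` satisfies `‖f'‖ ≤ L_v ‖f‖ + G η(t)`. A Gronwall inequality with a
nonnegative time-dependent forcing term, proved by comparing `‖f‖` with the barrier
`e^{K(t-a)} (‖f a‖ + Φ t - Φ a + ε (t - a))` where `Φ' = φ` and letting `ε → 0`, bounds
`‖f 1‖` by `e^{L_v(1-t₀)} · G · ∫_{t₀}^1 η`. For the quadratic ramp the integral is
`η_max (1 - t₀)/3`, computed through the primitive `η_max (t - t₀)³ / (3 (1 - t₀)²)`.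
-/

open Set Filter Topology Real

theorem norm_le_exp_mul_of_norm_deriv_right_le_mul_add
    {E : Type*} [NormedAddCommGroup E] [NormedSpace ℝ E]
    {f f' : ℝ → E} {φ Φ : ℝ → ℝ} {K a b : ℝ} (hK : 0 ≤ K)
    (hf : ContinuousOn f (Icc a b)) (hf' : ∀ t ∈ Ico a b, HasDerivWithinAt f (f' t) (Ici t) t)
    (hΦ : ContinuousOn Φ (Icc a b)) (hΦ' : ∀ t ∈ Ico a b, HasDerivWithinAt Φ (φ t) (Ici t) t)
    (hφ : ∀ t ∈ Ico a b, 0 ≤ φ t) (bound : ∀ t ∈ Ico a b, ‖f' t‖ ≤ K * ‖f t‖ + φ t) :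
    ∀ t ∈ Icc a b, ‖f t‖ ≤ exp (K * (t - a)) * (‖f a‖ + (Φ t - Φ a)) := by
  intro t ht
  have barrier : ∀ ε > 0, ‖f t‖ ≤ exp (K * (t - a)) * (‖f a‖ + (Φ t - Φ a) + ε * (t - a)) := by
    intro ε hε
    set B : ℝ → ℝ := fun s => exp (K * (s - a)) * (‖f a‖ + (Φ s - Φ a) + ε * (s - a))
    have hexp : ∀ s, HasDerivAt (fun s => exp (K * (s - a))) (exp (K * (s - a)) * K) s :=
      fun s => by simpa using ((hasDerivAt_id s).sub_const a).const_mul K |>.exp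
    refine image_norm_le_of_norm_deriv_right_lt_deriv_boundary' hf hf' (B := B)
      (B' := fun s => K * B s + exp (K * (s - a)) * (φ s + ε)) (by simp [B]) ?_ ?_ ?_ ht
    · exact (continuous_exp.comp_continuousOn (by fun_prop)).mul
        ((continuousOn_const.add (hΦ.sub continuousOn_const)).add (by fun_prop))
    · intro s hs
      have hlin : HasDerivWithinAt (fun s => ‖f a‖ + (Φ s - Φ a) + ε * (s - a)) (φ s + ε)
          (Ici s) s := by
        have := (((hΦ' s hs).sub_const (Φ a)).const_add ‖f a‖).add
          (((hasDerivWithinAt_id s (Ici s)).sub_const a).const_mul ε)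
        rw [mul_one] at this
        exact this
      refine ((hexp s).hasDerivWithinAt.mul hlin).congr_deriv ?_
      simp only [B]
      ring
    · intro s hs hfs
      have hone : 1 ≤ exp (K * (s - a)) := one_le_exp (mul_nonneg hK (sub_nonneg.2 hs.1))
      calc ‖f' s‖ ≤ K * B s + φ s := hfs ▸ bound s hs
        _ < K * B s + (φ s + ε) := by linarith
        _ ≤ K * B s + exp (K * (s - a)) * (φ s + ε) := by
          gcongr
          exact le_mul_of_one_le_left (by linarith [hφ s hs]) hone
  have hlim : Tendsto (fun ε => exp (K * (t - a)) * (‖f a‖ + (Φ t - Φ a) + ε * (t - a)))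
      (𝓝[>] 0) (𝓝 (exp (K * (t - a)) * (‖f a‖ + (Φ t - Φ a)))) := by
    have hcont : Continuous fun ε => exp (K * (t - a)) * (‖f a‖ + (Φ t - Φ a) + ε * (t - a)) := by
      fun_prop
    simpa using (hcont.tendsto 0).mono_left nhdsWithin_le_nhds
  exact ge_of_tendsto hlim (eventually_nhdsWithin_of_forall barrier)

theorem norm_sub_le_of_perturbed_trajectories_ODE
    {E : Type*} [NormedAddCommGroup E] [NormedSpace ℝ E]
    {v : E → ℝ → E} {g : E → E} {η H : ℝ → ℝ} {x y : ℝ → E} {L G a b : ℝ} (hL : 0 ≤ L)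
    (hlip : ∀ (t : ℝ) (z w : E), ‖v z t - v w t‖ ≤ L * ‖z - w‖) (hg : ∀ z, ‖g z‖ ≤ G)
    (hη : ∀ t ∈ Ico a b, 0 ≤ η t) (hH : ∀ t ∈ Icc a b, HasDerivAt H (η t) t)
    (hx : ∀ t ∈ Icc a b, HasDerivAt x (v (x t) t) t)
    (hy : ∀ t ∈ Icc a b, HasDerivAt y (v (y t) t - η t • g (y t)) t) (hab : a ≤ b) :
    ‖y b - x b‖ ≤ exp (L * (b - a)) * (‖y a - x a‖ + G * (H b - H a)) := by
  have hG : 0 ≤ G := (norm_nonneg _).trans (hg 0)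
  have hdev : ∀ t ∈ Icc a b, HasDerivAt (fun t => y t - x t)
      (v (y t) t - η t • g (y t) - v (x t) t) t := fun t ht => (hy t ht).sub (hx t ht)
  have bound : ∀ t ∈ Ico a b,
      ‖v (y t) t - η t • g (y t) - v (x t) t‖ ≤ L * ‖y t - x t‖ + G * η t := by
    intro t ht
    calc ‖v (y t) t - η t • g (y t) - v (x t) t‖
        = ‖(v (y t) t - v (x t) t) - η t • g (y t)‖ := by rw [sub_right_comm]
      _ ≤ ‖v (y t) t - v (x t) t‖ + ‖η t • g (y t)‖ := norm_sub_le _ _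
      _ ≤ L * ‖y t - x t‖ + G * η t := by
        rw [norm_smul, Real.norm_of_nonneg (hη t ht), mul_comm G]
        gcongr
        exacts [hlip t _ _, hη t ht, hg _]
  have hgronwall := norm_le_exp_mul_of_norm_deriv_right_le_mul_add (Φ := fun t => G * H t) hL
    (fun t ht => (hdev t ht).continuousAt.continuousWithinAt)
    (fun t ht => (hdev t (Ico_subset_Icc_self ht)).hasDerivWithinAt)
    (fun t ht => ((hH t ht).const_mul G).continuousAt.continuousWithinAt)
    (fun t ht => ((hH t (Ico_subset_Icc_self ht)).const_mul G).hasDerivWithinAt)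
    (fun t ht => mul_nonneg hG (hη t ht)) bound b (right_mem_Icc.2 hab)
  rwa [← mul_sub] at hgronwall

theorem hasDerivAt_mul_sub_pow_three_div_three (c t₀ t : ℝ) :
    HasDerivAt (fun s => c * (s - t₀) ^ 3 / 3) (c * (t - t₀) ^ 2) t := by
  have := (((hasDerivAt_id t).sub_const t₀).pow 3).const_mul c |>.div_const 3
  refine this.congr_deriv ?_
  simp only [id, Nat.cast_ofNat, mul_one]
  ring

theorem quadratic_schedule_terminal_bound_general
    {E : Type*} [NormedAddCommGroup E] [InnerProductSpace ℝ E]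
    (v : E → ℝ → E) (Lv : ℝ) (hLv : 0 ≤ Lv)
    (hlip : ∀ (t : ℝ) (z w : E), ‖v z t - v w t‖ ≤ Lv * ‖z - w‖)
    (g : E → E) (G : ℝ) (hgb : ∀ z : E, ‖g z‖ ≤ G)
    (t₀ : ℝ) (ht₀ : t₀ ∈ Set.Ico (0 : ℝ) 1) (ηmax : ℝ) (hηmax : 0 ≤ ηmax)
    (η : ℝ → ℝ) (hη : ∀ t ∈ Set.Icc t₀ 1, η t = ηmax * ((t - t₀) / (1 - t₀)) ^ 2)
    (x y : ℝ → E)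
    (hx : ∀ t ∈ Set.Icc t₀ 1, HasDerivAt x (v (x t) t) t)
    (hy : ∀ t ∈ Set.Icc t₀ 1, HasDerivAt y (v (y t) t - η t • g (y t)) t)
    (h0 : x t₀ = y t₀) :
    ‖y 1 - x 1‖ ≤ Real.exp (Lv * (1 - t₀)) * ηmax * G * (1 - t₀) / 3 := by
  obtain ⟨-, ht₀1⟩ := ht₀
  have hH : ∀ t ∈ Icc t₀ 1,
      HasDerivAt (fun s => ηmax / (1 - t₀) ^ 2 * (s - t₀) ^ 3 / 3) (η t) t := by
    intro t ht
    rw [hη t ht, div_pow, ← mul_div_assoc, mul_div_right_comm]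
    exact hasDerivAt_mul_sub_pow_three_div_three _ t₀ t
  have hη0 : ∀ t ∈ Ico t₀ 1, 0 ≤ η t := fun t ht => by
    rw [hη t (Ico_subset_Icc_self ht)]
    positivity
  calc ‖y 1 - x 1‖
      ≤ exp (Lv * (1 - t₀)) * (‖y t₀ - x t₀‖ + G * (ηmax / (1 - t₀) ^ 2 * (1 - t₀) ^ 3 / 3
          - ηmax / (1 - t₀) ^ 2 * (t₀ - t₀) ^ 3 / 3)) :=
        norm_sub_le_of_perturbed_trajectories_ODE hLv hlip hgb hη0 hH hx hy ht₀1.le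
    _ = Real.exp (Lv * (1 - t₀)) * ηmax * G * (1 - t₀) / 3 := by
        have : 1 - t₀ ≠ 0 := (sub_pos.2 ht₀1).ne'
        rw [h0, sub_self, norm_zero]
        field_simp
        ring

/-- Quantitative terminal deviation bound for the paper's quadratic late-time
adjustment schedule `η(t) = η_max ((t - t₀)/(1 - t₀))²` on `[t₀, 1]`:
`‖y 1 - x 1‖ ≤ e^{Lv (1 - t₀)} · η_max · G · (1 - t₀) / 3`, obtained from
Proposition A.4 using `∫_{t₀}^1 η(s) ds = η_max (1 - t₀)/3`. -/
theorem quadratic_schedule_terminal_bound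
    {E : Type*} [NormedAddCommGroup E] [InnerProductSpace ℝ E]
    (v : E → ℝ → E) (Lv : ℝ) (hLv : 0 ≤ Lv)
    (hlip : ∀ (t : ℝ) (z w : E), ‖v z t - v w t‖ ≤ Lv * ‖z - w‖)
    (g : E → E) (G : ℝ) (hG : 0 ≤ G) (hgb : ∀ z : E, ‖g z‖ ≤ G)
    (t₀ : ℝ) (ht₀ : t₀ ∈ Set.Ico (0 : ℝ) 1) (ηmax : ℝ) (hηmax : 0 ≤ ηmax)
    (η : ℝ → ℝ) (hη : ∀ t ∈ Set.Icc t₀ 1, η t = ηmax * ((t - t₀) / (1 - t₀)) ^ 2)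
    (x y : ℝ → E)
    (hx : ∀ t ∈ Set.Icc t₀ 1, HasDerivAt x (v (x t) t) t)
    (hy : ∀ t ∈ Set.Icc t₀ 1, HasDerivAt y (v (y t) t - η t • g (y t)) t)
    (h0 : x t₀ = y t₀) :
    ‖y 1 - x 1‖ ≤ Real.exp (Lv * (1 - t₀)) * ηmax * G * (1 - t₀) / 3 :=
  quadratic_schedule_terminal_bound_general v Lv hLv hlip g G hgb t₀ ht₀ ηmax hηmax η hη x y hx hy
    h0
end
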